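/- For the SI process, the discrete-time simulation never overtakes the discrete-event simulation: for every step size h > 0, every initial state x₀, and every sequence a₁, a₂, … of edge-timer vectors with nonnegative entries, the sequences defined by X₀ = X̃₀ = x₀, Xᵢ = g(Xᵢ₋₁, aᵢ) and X̃ᵢ = g̃(X̃ᵢ₋₁, aᵢ) satisfy Xᵢ ≤ X̃ᵢ (componentwise) for every i ≥ 0. In particular, when the aᵢ are random, X(ih) := X̃ᵢ ≥ Xᵢ almost surely. -/

import Mathlib

open MeasureTheory ProbabilityTheory Real

/-- View a Boolean infection state as a real number (`true ↦ 1`, `false ↦ 0`). -/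
def boolToR (b : Bool) : ℝ := if b then 1 else 0

open Classical in
/-- One step of the SI discrete-time simulation (DTS): node `j` is infected afterwards iff
it was infected, or some infected neighbor`s edge timer fires within time `h`. -/
noncomputable def siDTS {V : Type*} (G : SimpleGraph V) (h : ℝ) (x : V → Bool)
    (a : G.edgeSet → ℝ) : V → Bool := fun j =>
  if x j = true ∨ ∃ j', ∃ hadj : G.Adj j j',
      x j' = true ∧ a ⟨s(j, j'), (SimpleGraph.mem_edgeSet G).mpr hadj⟩ ≤ h
  then true else false

open Classical in
/-- State at time `h` of the SI discrete-event simulation (DES) started at `x` with edge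
timers `a`, via the first-passage-percolation description: node `j` is infected iff it was
infected, or there is a path from an infected node to `j` whose timers sum to at most `h`. -/
noncomputable def siDES {V : Type*} (G : SimpleGraph V) (h : ℝ) (x : V → Bool)
    (a : G.edgeSet → ℝ) : V → Bool := fun j =>
  if x j = true ∨ ∃ j₀, ∃ p : G.Walk j₀ j, x j₀ = true ∧
      (p.edges.attach.map fun e => a ⟨e.1, p.edges_subset_edgeSet e.2⟩).sum ≤ h
  then true else false


namespace SimpleGraph

variable {V : Type*} (G : SimpleGraph V) (h : ℝ)

theorem siDTS_eq_true_iff (x : V → Bool) (a : G.edgeSet → ℝ) (j : V) :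
    siDTS G h x a j = true ↔ x j = true ∨ ∃ j', ∃ hadj : G.Adj j j',
      x j' = true ∧ a ⟨s(j, j'), (mem_edgeSet G).mpr hadj⟩ ≤ h := by
  unfold siDTS
  split_ifs <;> simp_all

theorem siDES_eq_true_iff (x : V → Bool) (a : G.edgeSet → ℝ) (j : V) :
    siDES G h x a j = true ↔ x j = true ∨ ∃ j₀, ∃ p : G.Walk j₀ j, x j₀ = true ∧
      (p.edges.attach.map fun e => a ⟨e.1, p.edges_subset_edgeSet e.2⟩).sum ≤ h := by
  unfold siDES
  split_ifs <;> simp_all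

theorem siDTS_le_siDES (x : V → Bool) (a : G.edgeSet → ℝ) : siDTS G h x a ≤ siDES G h x a := by
  intro j
  rw [Bool.le_iff_imp, siDTS_eq_true_iff, siDES_eq_true_iff]
  rintro (hj | ⟨j', hadj, hj', hfire⟩)
  · exact Or.inl hj
  · refine Or.inr ⟨j', hadj.symm.toWalk, hj', ?_⟩
    simpa [Adj.edges_toWalk, Sym2.eq_swap] using hfire

theorem siDES_mono (a : G.edgeSet → ℝ) : Monotone fun x => siDES G h x a := by
  intro x x' hx j
  simp only [Bool.le_iff_imp, siDES_eq_true_iff]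
  rintro (hj | ⟨j₀, p, hj₀, hp⟩)
  · exact Or.inl (Bool.le_iff_imp.mp (hx j) hj)
  · exact Or.inr ⟨j₀, p, Bool.le_iff_imp.mp (hx j₀) hj₀, hp⟩

end SimpleGraph

theorem si_dts_le_des {V : Type*} (G : SimpleGraph V) (h : ℝ)
    (x₀ : V → Bool) (a : ℕ → G.edgeSet → ℝ)
    (X Xt : ℕ → V → Bool)
    (hX0 : X 0 = x₀) (hXt0 : Xt 0 = x₀)
    (hX : ∀ i : ℕ, X (i + 1) = siDTS G h (X i) (a (i + 1)))
    (hXt : ∀ i : ℕ, Xt (i + 1) = siDES G h (Xt i) (a (i + 1))) :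
    ∀ i : ℕ, ∀ j : V, X i j ≤ Xt i j := by
  intro i
  induction i with
  | zero => simp [hX0, hXt0]
  | succ i ih =>
    rw [hX i, hXt i]
    exact (SimpleGraph.siDTS_le_siDES G h (X i) _).trans (SimpleGraph.siDES_mono G h _ ih)
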